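/- arXiv:math/0607660 — 4 statements merged into one kernel-verified Lean document; each statement's English description precedes it below -/
import Mathlib

section
/- Let R be a commutative Noetherian ring of prime characteristic p whose Frobenius endomorphism is finite and flat, let b be an ideal of R, and let q = p^e for a positive integer e. Then the collection of ideals J of R satisfying b ⊆ J^{[q]} has a smallest element with respect to inclusion; explicitly, the ideal I = ⋂ { J : J an ideal of R with b ⊆ J^{[q]} } itself satisfies b ⊆ I^{[q]}, and hence is the unique smallest ideal J with b ⊆ J^{[q]}. -/
open Ideal

/-- The `q`-th bracket power `J^{[q]}` of an ideal: the ideal generated by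
the `q`-th powers of the elements of `J`. -/
def bracketPow {R : Type*} [CommRing R] (J : Ideal R) (q : ℕ) : Ideal R :=
  Ideal.span ((fun x => x ^ q) '' (J : Set R))

/-- The ideal `b^{[1/q]}`: the smallest ideal `J` with `b ⊆ J^{[q]}`
(realized as the intersection of all such ideals). -/
def frobRoot {R : Type*} [CommRing R] (b : Ideal R) (q : ℕ) : Ideal R :=
  sInf {J : Ideal R | b ≤ bracketPow J q}

/-- The generalized test ideal `τ(a^c) = ⋃_{e ≥ 1} (a^{⌈c p^e⌉})^{[1/p^e]}`. -/
noncomputable def testIdeal {R : Type*} [CommRing R] (p : ℕ) (a : Ideal R) (c : ℝ) : Ideal R :=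
  ⨆ e : ℕ, frobRoot (a ^ ⌈c * (p : ℝ) ^ (e + 1)⌉₊) (p ^ (e + 1))

/-- `ν_a^J(q)`: the largest nonnegative integer `r` with `a^r ⊄ J^{[q]}`
(and `0` if there is no such `r`). -/
noncomputable def nuF {R : Type*} [CommRing R] (a J : Ideal R) (q : ℕ) : ℕ :=
  sSup {r : ℕ | ¬ a ^ r ≤ bracketPow J q}

/-- The F-threshold `c^J(a) = sup_{e ≥ 1} ν_a^J(p^e)/p^e`. -/
noncomputable def FThreshold {R : Type*} [CommRing R] (p : ℕ) (a J : Ideal R) : ℝ :=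
  ⨆ e : ℕ, (nuF a J (p ^ (e + 1)) : ℝ) / (p : ℝ) ^ (e + 1)

/-- `α > 0` is an F-jumping exponent of `a` if `τ(a^α) ≠ τ(a^c)` for all `0 ≤ c < α`. -/
def IsFJumpingExponent {R : Type*} [CommRing R] (p : ℕ) (a : Ideal R) (α : ℝ) : Prop :=
  0 < α ∧ ∀ c : ℝ, 0 ≤ c → c < α → testIdeal p a c ≠ testIdeal p a α

/-! For a finite flat map `f` out of a Noetherian ring, the target is a projective module, and an
element `x` of a projective module lies in `I • ⊤` exactly when every linear functional sends `x`
into `I`. This characterisation is stable under intersections, so extension of ideals along `f`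
commutes with arbitrary intersections. With `f` the `e`-th Frobenius iterate, `J ↦ J^{[q]}` is
extension along `f`, so the intersection of all `J` with `b ⊆ J^{[q]}` still satisfies it. -/

theorem RingHom.Finite.pow {R : Type*} [CommRing R] {f : R →+* R} (hf : f.Finite) :
    ∀ n : ℕ, (f ^ n).Finite
  | 0 => RingHom.Finite.id R
  | n + 1 => by rw [pow_succ, RingHom.mul_def]; exact (hf.pow n).comp hf

theorem RingHom.Flat.pow {R : Type*} [CommRing R] {f : R →+* R} (hf : f.Flat) :
    ∀ n : ℕ, (f ^ n).Flat
  | 0 => RingHom.Flat.id R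
  | n + 1 => by rw [pow_succ, RingHom.mul_def]; exact hf.comp (hf.pow n)

section Projective

variable {R P : Type*} [CommRing R] [AddCommGroup P] [Module R P]

theorem Module.Dual.apply_mem_of_mem_smul_top (g : Module.Dual R P) {I : Ideal R} {x : P}
    (hx : x ∈ I • (⊤ : Submodule R P)) : g x ∈ I := by
  refine Submodule.smul_induction_on hx (fun r hr n _ => ?_) (fun _ _ h₁ h₂ => ?_)
  · rw [map_smul, smul_eq_mul]
    exact I.mul_mem_right _ hr
  · rw [map_add]
    exact add_mem h₁ h₂

theorem Module.Projective.mem_smul_top_iff [Module.Projective R P] {I : Ideal R} {x : P} :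
    x ∈ I • (⊤ : Submodule R P) ↔ ∀ g : Module.Dual R P, g x ∈ I := by
  refine ⟨fun hx g => g.apply_mem_of_mem_smul_top hx, fun h => ?_⟩
  obtain ⟨s, hs⟩ := Module.projective_def.mp ‹_›
  rw [← hs x, Finsupp.linearCombination_apply, Finsupp.sum]
  exact Submodule.sum_mem _ fun i _ =>
    Submodule.smul_mem_smul (h ((Finsupp.lapply i).comp s)) Submodule.mem_top

theorem Module.Projective.iInf_smul_top [Module.Projective R P] {ι : Sort*} (I : ι → Ideal R) :
    ⨅ i, I i • (⊤ : Submodule R P) = (⨅ i, I i) • ⊤ := by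
  ext x
  simp only [Submodule.mem_iInf, Module.Projective.mem_smul_top_iff]
  exact forall_comm

end Projective

theorem Ideal.map_iInf_of_projective {R S : Type*} [CommRing R] [CommRing S] [Algebra R S]
    [Module.Projective R S] {ι : Sort*} (I : ι → Ideal R) :
    (⨅ i, I i).map (algebraMap R S) = ⨅ i, (I i).map (algebraMap R S) := by
  apply Submodule.restrictScalars_injective R
  simp only [Submodule.restrictScalars_iInf, ← Ideal.smul_top_eq_map,
    Module.Projective.iInf_smul_top]

theorem Ideal.map_iInf_of_finite_of_flat {R S : Type*} [CommRing R] [IsNoetherianRing R]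
    [CommRing S] {f : R →+* S} (hfin : f.Finite) (hflat : f.Flat) {ι : Sort*}
    (I : ι → Ideal R) : (⨅ i, I i).map f = ⨅ i, (I i).map f := by
  algebraize [f]
  have := Module.finitePresentation_of_finite R S
  have := Module.Flat.projective_of_finitePresentation (R := R) (M := S)
  exact Ideal.map_iInf_of_projective I

theorem bracketPow_eq_map_iterateFrobenius {R : Type*} [CommRing R] (p : ℕ) [ExpChar R p]
    (e : ℕ) (J : Ideal R) : bracketPow J (p ^ e) = J.map (iterateFrobenius R p e) :=
  rfl

theorem stmt0_smallest_frobRoot_general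
    {R : Type*} [CommRing R] [IsNoetherianRing R] (p : ℕ) [Fact p.Prime] [CharP R p]
    (hfin : (frobenius R p).Finite) (hflat : (frobenius R p).Flat)
    (b : Ideal R) (e : ℕ) (q : ℕ) (hq : q = p ^ e) :
    b ≤ bracketPow (sInf {J : Ideal R | b ≤ bracketPow J q}) q ∧
      ∀ J : Ideal R, b ≤ bracketPow J q →
        sInf {J : Ideal R | b ≤ bracketPow J q} ≤ J := by
  refine ⟨?_, fun J hJ => sInf_le hJ⟩
  subst hq
  simp only [bracketPow_eq_map_iterateFrobenius, iterateFrobenius_eq_pow]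
  rw [sInf_eq_iInf', Ideal.map_iInf_of_finite_of_flat (hfin.pow e) (hflat.pow e)]
  exact le_iInf fun J => J.2

/-- existence of the smallest ideal `J` with `b ⊆ J^{[q]}`. -/
theorem stmt0_smallest_frobRoot
    {R : Type*} [CommRing R] [IsNoetherianRing R] (p : ℕ) [Fact p.Prime] [CharP R p]
    (hfin : (frobenius R p).Finite) (hflat : (frobenius R p).Flat)
    (b : Ideal R) (e : ℕ) (he : 1 ≤ e) (q : ℕ) (hq : q = p ^ e) :
    b ≤ bracketPow (sInf {J : Ideal R | b ≤ bracketPow J q}) q ∧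
      ∀ J : Ideal R, b ≤ bracketPow J q →
        sInf {J : Ideal R | b ≤ bracketPow J q} ≤ J :=
  stmt0_smallest_frobRoot_general p hfin hflat b e q hq
end

section
/- Let R be a commutative Noetherian ring of prime characteristic p whose Frobenius endomorphism is finite and flat, let a and b be ideals of R, and let q = p^e, q' = p^{e'} with e, e' positive integers. Then: (1) if a ⊆ b, then a^{[1/q]} ⊆ b^{[1/q]}; (2) (a ∩ b)^{[1/q]} ⊆ a^{[1/q]} ∩ b^{[1/q]} and a^{[1/q]} + b^{[1/q]} = (a + b)^{[1/q]}; (3) (a·b)^{[1/q]} ⊆ a^{[1/q]} · b^{[1/q]}; (4) (b^{[q']})^{[1/q]} = b^{[q'/q]} and this ideal is contained in (b^{[1/q]})^{[q']} (here, when q ≥ q', b^{[q'/q]} means b^{[1/p^{e−e'}]}, and when q' ≥ q it means b^{[p^{e'−e}]}); (5) b^{[1/(q q')]} ⊆ (b^{[1/q]})^{[1/q']}; (6) b^{[1/q]} ⊆ (b^{q'})^{[1/(q q')]}. -/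
open Ideal

/-!
The map `b ↦ b^{[1/q]}` is left adjoint to `J ↦ J^{[q]}`, i.e. `b ⊆ (b^{[1/q]})^{[q]}`.
Indeed, over a Noetherian ring a finite flat module is projective, so `R`, viewed as a module
over itself through `F^e`, is projective. For `x ∈ b`, the ideal generated by the values at `x`
of the `F^e`-linear functionals `R → R` lies in every `J` with `b ⊆ J^{[q]}`, and by
projectivity `x` lies in its extension along `F^e`. Since `F` induces the identity on `Spec R`,
it is faithfully flat, so `J ↦ J^{[q]}` reflects inclusions. Each property then follows
formally from these two facts together with `(J^{[q]})^{[q']} = J^{[qq']}`,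
`(IJ)^{[q]} = I^{[q]} J^{[q]}` and `J^{[q]} ⊆ J^q`.
-/

namespace Module.Dual

variable {R M : Type*} [CommRing R] [AddCommGroup M] [Module R M]

theorem apply_mem_of_mem_smul_top_s1 (ψ : Module.Dual R M) {J : Ideal R} {m : M}
    (hm : m ∈ J • (⊤ : Submodule R M)) : ψ m ∈ J := by
  have : ψ m ∈ (J • ⊤ : Submodule R M).map ψ := Submodule.mem_map_of_mem hm
  rw [Submodule.map_smul''] at this
  simpa using Submodule.smul_mono (le_refl J) le_top this

theorem mem_span_range_eval_smul_top [Module.Projective R M] (m : M) :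
    m ∈ span (Set.range fun ψ : Module.Dual R M => ψ m) • (⊤ : Submodule R M) := by
  obtain ⟨s, hs⟩ := Module.projective_def.mp ‹Module.Projective R M›
  suffices Finsupp.linearCombination R id (s m) ∈
      span (Set.range fun ψ : Module.Dual R M => ψ m) • (⊤ : Submodule R M) by
    rwa [hs m] at this
  rw [Finsupp.linearCombination_apply]
  refine Submodule.finsuppSum_mem _ _ _ _ fun i _ => ?_
  exact Submodule.smul_mem_smul (subset_span ⟨Finsupp.lapply i ∘ₗ s, rfl⟩) Submodule.mem_top

end Module.Dual

theorem Ideal.le_map_sInf_of_projective {R S : Type*} [CommRing R] [CommRing S] [Algebra R S]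
    [Module.Projective R S] (b : Ideal S) :
    b ≤ (sInf {J : Ideal R | b ≤ J.map (algebraMap R S)}).map (algebraMap R S) := by
  intro x hx
  set content := span (Set.range fun ψ : Module.Dual R S => ψ x)
  have hcontent : content ≤ sInf {J : Ideal R | b ≤ J.map (algebraMap R S)} := by
    refine le_sInf fun J hJ => span_le.mpr ?_
    rintro _ ⟨ψ, rfl⟩
    refine ψ.apply_mem_of_mem_smul_top_s1 ?_
    rw [smul_top_eq_map]
    exact hJ hx
  have := Submodule.smul_mono_left hcontent (Module.Dual.mem_span_range_eval_smul_top x)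
  rwa [smul_top_eq_map] at this

theorem RingHom.le_map_sInf_of_finite_of_flat {R S : Type*} [CommRing R] [CommRing S]
    [IsNoetherianRing R] {f : R →+* S} (hfin : f.Finite) (hflat : f.Flat) (b : Ideal S) :
    b ≤ (sInf {J : Ideal R | b ≤ J.map f}).map f := by
  algebraize [f]
  have := Module.finitePresentation_of_finite R S
  have := Module.Flat.projective_of_finitePresentation (R := R) (M := S)
  exact le_map_sInf_of_projective b

theorem RingHom.FaithfullyFlat.map_le_map_iff {R S : Type*} [CommRing R] [CommRing S]
    {f : R →+* S} (hf : f.FaithfullyFlat) {I J : Ideal R} : I.map f ≤ J.map f ↔ I ≤ J := by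
  algebraize [f]
  refine ⟨fun h => ?_, map_mono⟩
  rw [← comap_map_eq_self_of_faithfullyFlat (B := S) I,
    ← comap_map_eq_self_of_faithfullyFlat (B := S) J]
  exact comap_mono h

section bracketPow

variable {R : Type*} [CommRing R]

theorem bracketPow_mono {I J : Ideal R} (h : I ≤ J) (q : ℕ) :
    bracketPow I q ≤ bracketPow J q :=
  span_mono (Set.image_mono h)

theorem bracketPow_le_pow (J : Ideal R) (n : ℕ) : bracketPow J n ≤ J ^ n :=
  span_le.mpr fun _ ⟨_, hx, hxn⟩ => hxn ▸ pow_mem_pow hx n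

theorem frobRoot_mono {a b : Ideal R} (h : a ≤ b) (q : ℕ) :
    frobRoot a q ≤ frobRoot b q :=
  sInf_le_sInf fun _ hJ => h.trans hJ

end bracketPow

section Frobenius

universe u
variable {R : Type u} [CommRing R] (p : ℕ) [Fact p.Prime] [CharP R p]

theorem RingHom.StableUnderComposition.iterateFrobenius
    {P : ∀ {R S : Type u} [CommRing R] [CommRing S], (R →+* S) → Prop}
    (hP : RingHom.StableUnderComposition P) (hid : P (RingHom.id R)) (hfrob : P (frobenius R p)) :
    ∀ n, P (iterateFrobenius R p n)
  | 0 => by rwa [iterateFrobenius_zero]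
  | n + 1 => by
      rw [iterateFrobenius_add, iterateFrobenius_one]
      exact hP _ _ hfrob (iterateFrobenius hP hid hfrob n)

theorem comap_frobenius_of_isPrime (P : Ideal R) [P.IsPrime] : P.comap (frobenius R p) = P :=
  Ideal.ext fun _ => ‹P.IsPrime›.pow_mem_iff_mem p (Fact.out : p.Prime).pos

theorem frobenius_faithfullyFlat (hflat : (frobenius R p).Flat) :
    (frobenius R p).FaithfullyFlat :=
  RingHom.FaithfullyFlat.iff_flat_and_comap_surjective.mpr
    ⟨hflat, fun P => ⟨P, PrimeSpectrum.ext (comap_frobenius_of_isPrime p P.asIdeal)⟩⟩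

theorem bracketPow_eq_map (J : Ideal R) (e : ℕ) :
    bracketPow J (p ^ e) = J.map (iterateFrobenius R p e) := rfl

theorem bracketPow_bracketPow (J : Ideal R) (m n : ℕ) :
    bracketPow (bracketPow J (p ^ m)) (p ^ n) = bracketPow J (p ^ (n + m)) := by
  rw [bracketPow_eq_map, bracketPow_eq_map, bracketPow_eq_map, map_map, ← iterateFrobenius_add]

theorem bracketPow_mul (I J : Ideal R) (e : ℕ) :
    bracketPow (I * J) (p ^ e) = bracketPow I (p ^ e) * bracketPow J (p ^ e) := by
  rw [bracketPow_eq_map, bracketPow_eq_map, bracketPow_eq_map, Ideal.map_mul]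

theorem bracketPow_le_bracketPow_iff (hflat : (frobenius R p).Flat) {I J : Ideal R} (e : ℕ) :
    bracketPow I (p ^ e) ≤ bracketPow J (p ^ e) ↔ I ≤ J := by
  rw [bracketPow_eq_map, bracketPow_eq_map]
  exact (RingHom.FaithfullyFlat.stableUnderComposition.iterateFrobenius p
    (.of_bijective Function.bijective_id) (frobenius_faithfullyFlat p hflat) e).map_le_map_iff

end Frobenius

section frobRoot

variable {R : Type*} [CommRing R] [IsNoetherianRing R] (p : ℕ) [Fact p.Prime] [CharP R p]

theorem le_bracketPow_frobRoot (hfin : (frobenius R p).Finite) (hflat : (frobenius R p).Flat)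
    (b : Ideal R) (e : ℕ) : b ≤ bracketPow (frobRoot b (p ^ e)) (p ^ e) := by
  rw [bracketPow_eq_map]
  exact RingHom.le_map_sInf_of_finite_of_flat
    (RingHom.finite_stableUnderComposition.iterateFrobenius p (RingHom.Finite.id R) hfin e)
    (RingHom.Flat.stableUnderComposition.iterateFrobenius p (RingHom.Flat.id R) hflat e) b

theorem gc_frobRoot_bracketPow (hfin : (frobenius R p).Finite) (hflat : (frobenius R p).Flat)
    (e : ℕ) :
    GaloisConnection (fun b : Ideal R => frobRoot b (p ^ e)) (bracketPow · (p ^ e)) := fun b _ =>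
  ⟨fun h => (le_bracketPow_frobRoot p hfin hflat b e).trans (bracketPow_mono h _),
    fun h => sInf_le h⟩

theorem frobRoot_le_iff (hfin : (frobenius R p).Finite) (hflat : (frobenius R p).Flat)
    {b J : Ideal R} {e : ℕ} :
    frobRoot b (p ^ e) ≤ J ↔ b ≤ bracketPow J (p ^ e) :=
  gc_frobRoot_bracketPow p hfin hflat e b J

theorem frobRoot_sup (hfin : (frobenius R p).Finite) (hflat : (frobenius R p).Flat)
    (a b : Ideal R) (e : ℕ) :
    frobRoot (a ⊔ b) (p ^ e) = frobRoot a (p ^ e) ⊔ frobRoot b (p ^ e) :=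
  (gc_frobRoot_bracketPow p hfin hflat e).l_sup

theorem frobRoot_mul_le (hfin : (frobenius R p).Finite) (hflat : (frobenius R p).Flat)
    (a b : Ideal R) (e : ℕ) :
    frobRoot (a * b) (p ^ e) ≤ frobRoot a (p ^ e) * frobRoot b (p ^ e) := by
  have gc := gc_frobRoot_bracketPow p hfin hflat e
  rw [frobRoot_le_iff p hfin hflat, bracketPow_mul]
  exact mul_mono (gc.le_u_l a) (gc.le_u_l b)

theorem frobRoot_bracketPow_of_le (hfin : (frobenius R p).Finite) (hflat : (frobenius R p).Flat)
    (b : Ideal R) {e e' : ℕ} (h : e' ≤ e) :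
    frobRoot (bracketPow b (p ^ e')) (p ^ e) = frobRoot b (p ^ (e - e')) := by
  refine eq_of_forall_ge_iff fun J => ?_
  rw [frobRoot_le_iff p hfin hflat, frobRoot_le_iff p hfin hflat,
    ← bracketPow_le_bracketPow_iff p hflat e' (I := b), bracketPow_bracketPow,
    Nat.add_sub_cancel' h]

theorem frobRoot_bracketPow_of_ge (hfin : (frobenius R p).Finite) (hflat : (frobenius R p).Flat)
    (b : Ideal R) {e e' : ℕ} (h : e ≤ e') :
    frobRoot (bracketPow b (p ^ e')) (p ^ e) = bracketPow b (p ^ (e' - e)) := by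
  refine eq_of_forall_ge_iff fun J => ?_
  rw [frobRoot_le_iff p hfin hflat, ← bracketPow_le_bracketPow_iff p hflat e (J := J),
    bracketPow_bracketPow, Nat.add_sub_cancel' h]

theorem frobRoot_bracketPow_le (hfin : (frobenius R p).Finite) (hflat : (frobenius R p).Flat)
    (b : Ideal R) (e e' : ℕ) :
    frobRoot (bracketPow b (p ^ e')) (p ^ e) ≤ bracketPow (frobRoot b (p ^ e)) (p ^ e') := by
  rw [frobRoot_le_iff p hfin hflat, bracketPow_bracketPow, add_comm, ← bracketPow_bracketPow]
  exact bracketPow_mono ((gc_frobRoot_bracketPow p hfin hflat e).le_u_l b) _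

theorem frobRoot_pow_add_le (hfin : (frobenius R p).Finite) (hflat : (frobenius R p).Flat)
    (b : Ideal R) (e e' : ℕ) :
    frobRoot b (p ^ (e + e')) ≤ frobRoot (frobRoot b (p ^ e)) (p ^ e') := by
  rw [frobRoot_le_iff p hfin hflat, ← bracketPow_bracketPow, ← frobRoot_le_iff p hfin hflat,
    ← frobRoot_le_iff p hfin hflat]

theorem frobRoot_le_frobRoot_pow (hfin : (frobenius R p).Finite) (hflat : (frobenius R p).Flat)
    (b : Ideal R) (e e' : ℕ) :
    frobRoot b (p ^ e) ≤ frobRoot (b ^ p ^ e') (p ^ (e + e')) := by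
  rw [frobRoot_le_iff p hfin hflat, ← bracketPow_le_bracketPow_iff p hflat e',
    bracketPow_bracketPow, add_comm, ← frobRoot_le_iff p hfin hflat]
  exact frobRoot_mono (bracketPow_le_pow b _) _

end frobRoot

theorem stmt1_frobRoot_basic_properties_general
    {R : Type*} [CommRing R] [IsNoetherianRing R] (p : ℕ) [Fact p.Prime] [CharP R p]
    (hfin : (frobenius R p).Finite) (hflat : (frobenius R p).Flat)
    (a b : Ideal R) (e e' : ℕ) :
    (a ≤ b → frobRoot a (p ^ e) ≤ frobRoot b (p ^ e)) ∧
    (frobRoot (a ⊓ b) (p ^ e) ≤ frobRoot a (p ^ e) ⊓ frobRoot b (p ^ e)) ∧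
    (frobRoot a (p ^ e) + frobRoot b (p ^ e) = frobRoot (a + b) (p ^ e)) ∧
    (frobRoot (a * b) (p ^ e) ≤ frobRoot a (p ^ e) * frobRoot b (p ^ e)) ∧
    (e' ≤ e → frobRoot (bracketPow b (p ^ e')) (p ^ e) = frobRoot b (p ^ (e - e'))) ∧
    (e ≤ e' → frobRoot (bracketPow b (p ^ e')) (p ^ e) = bracketPow b (p ^ (e' - e))) ∧
    (frobRoot (bracketPow b (p ^ e')) (p ^ e) ≤ bracketPow (frobRoot b (p ^ e)) (p ^ e')) ∧
    (frobRoot b (p ^ (e + e')) ≤ frobRoot (frobRoot b (p ^ e)) (p ^ e')) ∧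
    (frobRoot b (p ^ e) ≤ frobRoot (b ^ (p ^ e')) (p ^ (e + e'))) :=
  ⟨(frobRoot_mono · _),
    le_inf (frobRoot_mono inf_le_left _) (frobRoot_mono inf_le_right _),
    (frobRoot_sup p hfin hflat a b e).symm,
    frobRoot_mul_le p hfin hflat a b e,
    frobRoot_bracketPow_of_le p hfin hflat b,
    frobRoot_bracketPow_of_ge p hfin hflat b,
    frobRoot_bracketPow_le p hfin hflat b e e',
    frobRoot_pow_add_le p hfin hflat b e e',
    frobRoot_le_frobRoot_pow p hfin hflat b e e'⟩

/-- basic properties of the ideals `b^{[1/q]}`. -/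
theorem stmt1_frobRoot_basic_properties
    {R : Type*} [CommRing R] [IsNoetherianRing R] (p : ℕ) [Fact p.Prime] [CharP R p]
    (hfin : (frobenius R p).Finite) (hflat : (frobenius R p).Flat)
    (a b : Ideal R) (e e' : ℕ) (he : 1 ≤ e) (he' : 1 ≤ e') :
    (a ≤ b → frobRoot a (p ^ e) ≤ frobRoot b (p ^ e)) ∧
    (frobRoot (a ⊓ b) (p ^ e) ≤ frobRoot a (p ^ e) ⊓ frobRoot b (p ^ e)) ∧
    (frobRoot a (p ^ e) + frobRoot b (p ^ e) = frobRoot (a + b) (p ^ e)) ∧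
    (frobRoot (a * b) (p ^ e) ≤ frobRoot a (p ^ e) * frobRoot b (p ^ e)) ∧
    (e' ≤ e → frobRoot (bracketPow b (p ^ e')) (p ^ e) = frobRoot b (p ^ (e - e'))) ∧
    (e ≤ e' → frobRoot (bracketPow b (p ^ e')) (p ^ e) = bracketPow b (p ^ (e' - e))) ∧
    (frobRoot (bracketPow b (p ^ e')) (p ^ e) ≤ bracketPow (frobRoot b (p ^ e)) (p ^ e')) ∧
    (frobRoot b (p ^ (e + e')) ≤ frobRoot (frobRoot b (p ^ e)) (p ^ e')) ∧
    (frobRoot b (p ^ e) ≤ frobRoot (b ^ (p ^ e')) (p ^ (e + e'))) :=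
  stmt1_frobRoot_basic_properties_general p hfin hflat a b e e'
end

section
/- Let R be a commutative Noetherian ring of prime characteristic p whose Frobenius endomorphism is finite and flat, and let a be an ideal of R. If r, r' are nonnegative integers and e, e' are nonnegative integers such that r/p^e ≥ r'/p^{e'} and e' ≥ e, then (a^r)^{[1/p^e]} ⊆ (a^{r'})^{[1/p^{e'}]}. -/
open Ideal

/-!
Put `d = e' - e`. If `a^{r'} ⊆ J^{[p^{e'}]}`, then `(a^r)^{[p^d]} ⊆ a^{r p^d} ⊆ a^{r'} ⊆ J^{[p^{e'}]}
= (J^{[p^e]})^{[p^d]}`, since `r' ≤ r p^d`. The Frobenius `F^d` is flat and induces the identity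
on `Spec R`, hence is faithfully flat, so extension along it reflects inclusions of ideals and
`a^r ⊆ J^{[p^e]}`.
-/

namespace Ideal

variable {R S : Type*} [CommRing R] [CommRing S]

theorem le_of_map_le_map_of_faithfullyFlat {f : R →+* S} (hf : f.FaithfullyFlat)
    {I K : Ideal R} (h : I.map f ≤ K.map f) : I ≤ K := by
  algebraize [f]
  calc I ≤ (I.map f).comap f := le_comap_map
    _ ≤ (K.map f).comap f := comap_mono h
    _ = K := comap_map_eq_self_of_faithfullyFlat K

end Ideal

section Frobenius

variable {R : Type*} [CommRing R] {p : ℕ} [ExpChar R p]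

theorem PrimeSpectrum.comap_iterateFrobenius (n : ℕ) :
    PrimeSpectrum.comap (iterateFrobenius R p n) = id := by
  ext P x
  exact P.isPrime.pow_mem_iff_mem _ (expChar_pow_pos R p n)

theorem RingHom.Flat.iterateFrobenius (hflat : (frobenius R p).Flat) (n : ℕ) :
    (iterateFrobenius R p n).Flat := by
  induction n with
  | zero => simpa [iterateFrobenius_zero] using RingHom.Flat.id R
  | succ n ih =>
    rw [iterateFrobenius_add, iterateFrobenius_one]
    exact hflat.comp ih

theorem RingHom.FaithfullyFlat.iterateFrobenius (hflat : (frobenius R p).Flat) (n : ℕ) :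
    (iterateFrobenius R p n).FaithfullyFlat :=
  RingHom.FaithfullyFlat.iff_flat_and_comap_surjective.mpr
    ⟨.iterateFrobenius hflat n, by
      rw [PrimeSpectrum.comap_iterateFrobenius]; exact Function.surjective_id⟩

theorem bracketPow_expChar_pow (J : Ideal R) (n : ℕ) :
    bracketPow J (p ^ n) = J.map (iterateFrobenius R p n) := rfl

theorem map_iterateFrobenius_pow_le (a : Ideal R) (r n : ℕ) :
    (a ^ r).map (iterateFrobenius R p n) ≤ a ^ (r * p ^ n) := by
  rw [Ideal.map_le_iff_le_comap]
  intro y hy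
  rw [Ideal.mem_comap, iterateFrobenius_def, pow_mul]
  exact Ideal.pow_mem_pow hy _

end Frobenius

theorem Nat.le_mul_pow_sub_of_div_le {p r r' e e' : ℕ} (hp : 0 < p)
    (h : (r' : ℝ) / (p : ℝ) ^ e' ≤ (r : ℝ) / (p : ℝ) ^ e) (he : e ≤ e') :
    r' ≤ r * p ^ (e' - e) := by
  have hpR : (0 : ℝ) < p := by exact_mod_cast hp
  rw [div_le_div_iff₀ (pow_pos hpR e') (pow_pos hpR e), ← Nat.sub_add_cancel he, pow_add,
    ← mul_assoc] at h
  exact Nat.le_of_mul_le_mul_right (by exact_mod_cast h) (pow_pos hp e)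

theorem stmt3_frobRoot_pow_mono_general
    {R : Type*} [CommRing R] (p : ℕ) [Fact p.Prime] [CharP R p]
    (hflat : (frobenius R p).Flat)
    (a : Ideal R) (r r' e e' : ℕ)
    (h1 : (r' : ℝ) / (p : ℝ) ^ e' ≤ (r : ℝ) / (p : ℝ) ^ e) (h2 : e ≤ e') :
    frobRoot (a ^ r) (p ^ e) ≤ frobRoot (a ^ r') (p ^ e') := by
  refine le_sInf fun J (hJ : a ^ r' ≤ bracketPow J (p ^ e')) => sInf_le ?_
  show a ^ r ≤ bracketPow J (p ^ e)
  set d := e' - e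
  have hr : r' ≤ r * p ^ d := Nat.le_mul_pow_sub_of_div_le (Fact.out : p.Prime).pos h1 h2
  apply Ideal.le_of_map_le_map_of_faithfullyFlat (.iterateFrobenius hflat d)
  calc (a ^ r).map (iterateFrobenius R p d) ≤ a ^ (r * p ^ d) := map_iterateFrobenius_pow_le a r d
    _ ≤ a ^ r' := Ideal.pow_le_pow_right hr
    _ ≤ bracketPow J (p ^ e') := hJ
    _ = (bracketPow J (p ^ e)).map (iterateFrobenius R p d) := by
      rw [bracketPow_expChar_pow, bracketPow_expChar_pow, Ideal.map_map, ← iterateFrobenius_add,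
        Nat.sub_add_cancel h2]

/-- monotonicity `(a^r)^{[1/p^e]} ⊆ (a^{r'})^{[1/p^{e'}]}`
when `r/p^e ≥ r'/p^{e'}` and `e' ≥ e`. -/
theorem stmt3_frobRoot_pow_mono
    {R : Type*} [CommRing R] [IsNoetherianRing R] (p : ℕ) [Fact p.Prime] [CharP R p]
    (hfin : (frobenius R p).Finite) (hflat : (frobenius R p).Flat)
    (a : Ideal R) (r r' e e' : ℕ)
    (h1 : (r' : ℝ) / (p : ℝ) ^ e' ≤ (r : ℝ) / (p : ℝ) ^ e) (h2 : e ≤ e') :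
    frobRoot (a ^ r) (p ^ e) ≤ frobRoot (a ^ r') (p ^ e') :=
  stmt3_frobRoot_pow_mono_general p hflat a r r' e e' h1 h2
end

section
/- Let k be a field of prime characteristic p with [k : k^p] < ∞, let R = k[x₁, …, xₙ] be a polynomial ring over k, and let a be an ideal of R that can be generated by polynomials of degree at most d. Then for every real number c ≥ 0 the generalized test ideal τ(a^c) can be generated by polynomials of degree at most ⌊c d⌋, where ⌊x⌋ denotes the greatest integer ≤ x. -/
set_option linter.unusedSectionVars false
set_option linter.unusedVariables false
set_option maxHeartbeats 1600000

open Ideal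

lemma mem_frobRoot {R : Type*} [CommRing R] {b : Ideal R} {q : ℕ} {x : R} :
    x ∈ frobRoot b q ↔ ∀ J : Ideal R, b ≤ bracketPow J q → x ∈ J := by
  unfold frobRoot
  exact Submodule.mem_sInf

lemma exists_pbasis (p : ℕ) [Fact p.Prime] (k : Type*) [Field k] [CharP k p]
    (hk : (frobenius k p).Finite) :
    ∃ (m : ℕ) (lam : Fin m → k) (j0 : Fin m), lam j0 = 1 ∧
      (∀ x : k, ∃ cf : Fin m → k, x = ∑ j, (cf j) ^ p * lam j) ∧
      (∀ cf : Fin m → k, ∑ j, (cf j) ^ p * lam j = 0 → ∀ j, cf j = 0) := by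
  letI : Algebra k k := (frobenius k p).toAlgebra
  letI : Module k k := Algebra.toModule
  letI : SMul k k := Algebra.toSMul
  haveI : Module.Finite k k := hk
  have hsmul : ∀ (c x : k), c • x = c ^ p * x := fun c x => by
    rw [Algebra.smul_def]; rfl
  have h1 : LinearIndepOn k id ({1} : Set k) := by
    rw [linearIndepOn_singleton_iff]
    exact one_ne_zero
  haveI : FiniteDimensional k k := inferInstance
  set S := h1.extend (Set.subset_univ ({1} : Set k)) with hS
  let B : Module.Basis S k k := Module.Basis.extend h1
  haveI : Fintype S := FiniteDimensional.fintypeBasisIndex B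
  set m := Fintype.card S with hm
  let eqv : Fin m ≃ S := (Fintype.equivFin _).symm
  have hBapp : ∀ i : S, B i = (i : k) := fun i => Module.Basis.extend_apply_self h1 i
  have key : ∀ cf : Fin m → k, ∑ j, (cf j) ^ p * ((eqv j : S) : k)
      = ∑ i : S, (cf (eqv.symm i)) • B i := by
    intro cf
    refine Fintype.sum_equiv eqv _ _ ?_
    intro j
    rw [hsmul, hBapp]
    simp only [Equiv.symm_apply_apply]
  refine ⟨m, fun j => ((eqv j : S) : k), eqv.symm ⟨1, h1.subset_extend _ rfl⟩, ?_, ?_, ?_⟩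
  · simp only [Equiv.apply_symm_apply]
  · intro x
    refine ⟨fun j => B.repr x (eqv j), ?_⟩
    rw [key fun j => B.repr x (eqv j)]
    have hx := B.sum_repr x
    simp only [Equiv.apply_symm_apply]
    exact hx.symm
  · intro cf hcf j
    rw [key cf] at hcf
    have h3 := Fintype.linearIndependent_iff.mp B.linearIndependent _ hcf
    have := h3 (eqv j)
    simpa using this

open MvPolynomial

section FrobAux

variable (p : ℕ) [Fact p.Prime] {k : Type*} [Field k] [CharP k p] {n m : ℕ} (lam : Fin m → k)

noncomputable def embedA (α : Fin n → Fin p) : Fin n →₀ ℕ :=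
  Finsupp.equivFunOnFinite.symm fun t => (α t : ℕ)

@[simp] lemma embedA_apply (α : Fin n → Fin p) (t : Fin n) : embedA p α t = (α t : ℕ) := rfl

noncomputable def bvec (i : (Fin n → Fin p) × Fin m) : MvPolynomial (Fin n) k :=
  monomial (embedA p i.1) (lam i.2)

lemma pow_char_eq (g : MvPolynomial (Fin n) k) :
    g ^ p = ∑ γ ∈ g.support, monomial (p • γ) (g.coeff γ ^ p) := by
  conv_lhs => rw [g.as_sum]
  rw [sum_pow_char]
  exact Finset.sum_congr rfl fun γ _ => by rw [monomial_pow]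

lemma smul_finsupp_inj {γ δ : Fin n →₀ ℕ} (hp : p ≠ 0) (h : p • γ = p • δ) : γ = δ := by
  ext t
  have := DFunLike.congr_fun h t
  simp only [Finsupp.smul_apply, smul_eq_mul] at this
  exact Nat.eq_of_mul_eq_mul_left (Nat.pos_of_ne_zero hp) this

lemma coeff_pow_char_smul (g : MvPolynomial (Fin n) k) (δ : Fin n →₀ ℕ) :
    (g ^ p).coeff (p • δ) = g.coeff δ ^ p := by
  have hp : p ≠ 0 := (Fact.out : p.Prime).ne_zero
  rw [pow_char_eq, coeff_sum]
  have h1 : ∀ γ ∈ g.support, coeff (p • δ) (monomial (p • γ) (g.coeff γ ^ p))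
      = if γ = δ then g.coeff γ ^ p else 0 := by
    intro γ _
    rw [coeff_monomial]
    congr 1
    simp only [eq_iff_iff]
    exact ⟨fun h => smul_finsupp_inj p hp h, fun h => by rw [h]⟩
  rw [Finset.sum_congr rfl h1, Finset.sum_ite_eq' g.support δ (fun γ => g.coeff γ ^ p)]
  split_ifs with h
  · rfl
  · rw [notMem_support_iff.mp h, zero_pow hp]

lemma coeff_pow_char_not_dvd (g : MvPolynomial (Fin n) k) (δ : Fin n →₀ ℕ) (t : Fin n)
    (h : ¬ p ∣ δ t) : (g ^ p).coeff δ = 0 := by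
  rw [pow_char_eq, coeff_sum]
  refine Finset.sum_eq_zero fun γ _ => ?_
  rw [coeff_monomial, if_neg]
  intro hγ
  exact h ⟨γ t, by rw [← hγ]; simp [mul_comm]⟩

/-- Master coefficient formula. -/
lemma master_coeff (g : (Fin n → Fin p) × Fin m → MvPolynomial (Fin n) k)
    (γ₀ : Fin n →₀ ℕ) (α : Fin n → Fin p) :
    coeff (p • γ₀ + embedA p α) (∑ i, (g i) ^ p * bvec p lam i)
      = ∑ j, ((g (α, j)).coeff γ₀) ^ p * lam j := by
  have hp : p ≠ 0 := (Fact.out : p.Prime).ne_zero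
  rw [coeff_sum, Fintype.sum_prod_type]
  have hterm : ∀ (α' : Fin n → Fin p) (j : Fin m),
      coeff (p • γ₀ + embedA p α) ((g (α', j)) ^ p * bvec p lam (α', j))
        = if α' = α then ((g (α, j)).coeff γ₀) ^ p * lam j else 0 := by
    intro α' j
    rw [bvec, coeff_mul_monomial']
    by_cases hα : α' = α
    · subst hα
      rw [if_pos, if_pos rfl, add_tsub_cancel_right, coeff_pow_char_smul]
      exact le_add_self
    · rw [if_neg hα]
      obtain ⟨t, ht⟩ : ∃ t, α' t ≠ α t := by
        by_contra hco
        push_neg at hco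
        exact hα (funext fun t => Fin.ext (by exact_mod_cast congrArg Fin.val (hco t)))
      split_ifs with hle
      · have hle_t : (α' t : ℕ) ≤ p * γ₀ t + (α t : ℕ) := by
          have := hle t
          simpa using this
        rw [coeff_pow_char_not_dvd p _ _ t, zero_mul]
        intro ⟨s, hs⟩
        have hsub : (p • γ₀ + embedA p α - embedA p α') t
            = p * γ₀ t + (α t : ℕ) - (α' t : ℕ) := by
          simp [Finsupp.tsub_apply]
        rw [hsub] at hs
        have heq : p * γ₀ t + (α t : ℕ) = p * s + (α' t : ℕ) := by omega
        have h1 : (p * γ₀ t + (α t : ℕ)) % p = (α t : ℕ) % p := by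
          simp [Nat.add_mul_mod_self_left, Nat.mul_add_mod]
        have h2 : (p * s + (α' t : ℕ)) % p = (α' t : ℕ) % p := by
          simp [Nat.mul_add_mod]
        rw [heq, h2] at h1
        have : (α' t : ℕ) = (α t : ℕ) := by
          rw [Nat.mod_eq_of_lt (α' t).isLt, Nat.mod_eq_of_lt (α t).isLt] at h1
          exact h1
        exact (ht (Fin.ext this)).elim
      · rfl
  rw [Finset.sum_congr rfl fun α' _ => Finset.sum_congr rfl fun j _ => hterm α' j]
  simp only [Finset.sum_ite_irrel, Finset.sum_const_zero]
  rw [Finset.sum_ite_eq' Finset.univ α]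
  simp

lemma coreU (hind : ∀ cf : Fin m → k, ∑ j, cf j ^ p * lam j = 0 → ∀ j, cf j = 0)
    (g : (Fin n → Fin p) × Fin m → MvPolynomial (Fin n) k)
    (h : ∑ i, (g i) ^ p * bvec p lam i = 0) : ∀ i, g i = 0 := by
  rintro ⟨α, j⟩
  ext γ₀
  have hm := master_coeff p lam g γ₀ α
  rw [h] at hm
  simp only [coeff_zero] at hm ⊢
  exact hind _ hm.symm j

lemma coreE_monomial
    (hspan : ∀ x : k, ∃ cf : Fin m → k, x = ∑ j, cf j ^ p * lam j)
    (hind : ∀ cf : Fin m → k, ∑ j, cf j ^ p * lam j = 0 → ∀ j, cf j = 0)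
    (γc : Fin n →₀ ℕ) (b : k) :
    ∃ g : (Fin n → Fin p) × Fin m → MvPolynomial (Fin n) k,
      (monomial γc b : MvPolynomial (Fin n) k) = ∑ i, (g i) ^ p * bvec p lam i ∧
      ∀ i γ', γ' ∈ (g i).support → b ≠ 0 ∧ p • γ' ≤ γc := by
  have hp : p ≠ 0 := (Fact.out : p.Prime).ne_zero
  obtain ⟨cf, hb⟩ := hspan b
  have hcf0 : b = 0 → ∀ j, cf j = 0 := fun h0 => hind cf (by rw [← hb, h0])
  set α : Fin n → Fin p := fun t => ⟨γc t % p, Nat.mod_lt _ (Nat.pos_of_ne_zero hp)⟩ with hα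
  set γ₀ : Fin n →₀ ℕ := Finsupp.equivFunOnFinite.symm (fun t => γc t / p) with hγ₀
  have hdecomp : p • γ₀ + embedA p α = γc := by
    ext t
    simp only [Finsupp.add_apply, Finsupp.smul_apply, smul_eq_mul, embedA_apply, hγ₀, hα]
    show p * (γc t / p) + γc t % p = γc t
    exact Nat.div_add_mod _ _
  refine ⟨fun i => if i.1 = α then monomial γ₀ (cf i.2) else 0, ?_, ?_⟩
  · have hterm : ∀ (α' : Fin n → Fin p) (j : Fin m),
        ((if α' = α then monomial γ₀ (cf j) else 0) : MvPolynomial (Fin n) k) ^ p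
            * bvec p lam (α', j)
          = if α' = α then monomial γc (cf j ^ p * lam j) else 0 := by
      intro α' j
      by_cases h : α' = α
      · subst h
        rw [if_pos rfl, if_pos rfl, monomial_pow, bvec, monomial_mul, hdecomp]
      · rw [if_neg h, if_neg h, zero_pow hp, zero_mul]
    rw [Fintype.sum_prod_type]
    rw [Finset.sum_congr rfl fun α' _ => Finset.sum_congr rfl fun j _ => hterm α' j]
    simp only [Finset.sum_ite_irrel, Finset.sum_const_zero]
    rw [Finset.sum_ite_eq' Finset.univ α]
    simp only [Finset.mem_univ, if_pos]
    rw [← map_sum (monomial γc), ← hb]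
  · rintro ⟨α', j⟩ γ' hγ'
    by_cases h : α' = α
    · classical
      have hγ'2 : γ' ∈ (monomial γ₀ (cf j) : MvPolynomial (Fin n) k).support := by
        simpa [h] using hγ'
      rw [support_monomial] at hγ'2
      rename' hγ'2 => hγ'
      split_ifs at hγ' with hcf
      · exact absurd hγ' (Finset.notMem_empty _)
      · have hγ'' : γ' = γ₀ := Finset.mem_singleton.mp hγ'
        refine ⟨fun h0 => hcf (hcf0 h0 j), ?_⟩
        rw [hγ'', ← hdecomp]
        exact self_le_add_right _ _
    · simp only [if_neg h, MvPolynomial.support_zero] at hγ'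
      exact absurd hγ' (Finset.notMem_empty _)

lemma coreE
    (hspan : ∀ x : k, ∃ cf : Fin m → k, x = ∑ j, cf j ^ p * lam j)
    (hind : ∀ cf : Fin m → k, ∑ j, cf j ^ p * lam j = 0 → ∀ j, cf j = 0)
    (f : MvPolynomial (Fin n) k) :
    ∃ g : (Fin n → Fin p) × Fin m → MvPolynomial (Fin n) k,
      f = ∑ i, (g i) ^ p * bvec p lam i ∧
      ∀ i γ', γ' ∈ (g i).support → ∃ γ ∈ f.support, p • γ' ≤ γ := by
  induction f using MvPolynomial.monomial_add_induction_on with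
  | C a =>
    obtain ⟨g, hg, hsupp⟩ := coreE_monomial p lam hspan hind 0 a
    rw [← C_apply] at hg
    refine ⟨g, hg, fun i γ' hγ' => ?_⟩
    obtain ⟨ha, hle⟩ := hsupp i γ' hγ'
    refine ⟨0, ?_, hle⟩
    rw [mem_support_iff]
    simpa using ha
  | monomial_add a b f' ha hb IH =>
    obtain ⟨g', hg', hsupp'⟩ := IH
    obtain ⟨gm, hgm, hsuppm⟩ := coreE_monomial p lam hspan hind a b
    refine ⟨fun i => gm i + g' i, ?_, ?_⟩
    · have : ∀ i : (Fin n → Fin p) × Fin m,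
          (gm i + g' i) ^ p * bvec p lam i
            = (gm i) ^ p * bvec p lam i + (g' i) ^ p * bvec p lam i := by
        intro i
        rw [add_pow_char, add_mul]
      rw [Finset.sum_congr rfl fun i _ => this i, Finset.sum_add_distrib, ← hgm, ← hg']
    · intro i γ' hγ'
      have hγ'' := MvPolynomial.support_add hγ'
      rw [Finset.mem_union] at hγ''
      rcases hγ'' with hγm | hγf
      · obtain ⟨hbne, hle⟩ := hsuppm i γ' hγm
        refine ⟨a, ?_, hle⟩
        rw [mem_support_iff, coeff_add, coeff_monomial, if_pos rfl,
          notMem_support_iff.mp ha, add_zero]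
        exact hbne
      · obtain ⟨γ, hγ, hle⟩ := hsupp' i γ' hγf
        refine ⟨γ, ?_, hle⟩
        have hne : γ ≠ a := fun h => ha (h ▸ hγ)
        rw [mem_support_iff, coeff_add, coeff_monomial, if_neg (fun h => hne h.symm),
          zero_add]
        exact mem_support_iff.mp hγ

lemma degSum_eq (γ : Fin n →₀ ℕ) : (γ.sum fun _ e => e) = ∑ t, γ t :=
  Finsupp.sum_fintype _ _ (fun _ => rfl)

lemma coreE'
    (hspan : ∀ x : k, ∃ cf : Fin m → k, x = ∑ j, cf j ^ p * lam j)
    (hind : ∀ cf : Fin m → k, ∑ j, cf j ^ p * lam j = 0 → ∀ j, cf j = 0)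
    (f : MvPolynomial (Fin n) k) :
    ∃ g : (Fin n → Fin p) × Fin m → MvPolynomial (Fin n) k,
      f = ∑ i, (g i) ^ p * bvec p lam i ∧
      ∀ i, (g i).totalDegree ≤ f.totalDegree / p := by
  have hp : 0 < p := (Fact.out : p.Prime).pos
  obtain ⟨g, hg, hsupp⟩ := coreE p lam hspan hind f
  refine ⟨g, hg, fun i => ?_⟩
  apply Finset.sup_le
  intro γ' hγ'
  obtain ⟨γ, hγ, hle⟩ := hsupp i γ' hγ'
  rw [Nat.le_div_iff_mul_le hp]
  calc (γ'.sum fun _ e => e) * p = (p • γ').sum fun _ e => e := by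
        rw [degSum_eq, degSum_eq, Finset.sum_mul]
        refine Finset.sum_congr rfl fun t _ => ?_
        simp [mul_comm]
    _ ≤ γ.sum fun _ e => e := by
        rw [degSum_eq, degSum_eq]
        exact Finset.sum_le_sum fun t _ => hle t
    _ ≤ f.totalDegree := MvPolynomial.le_totalDegree hγ

noncomputable def bprod (e : ℕ) (w : Fin e → (Fin n → Fin p) × Fin m) :
    MvPolynomial (Fin n) k :=
  ∏ i, (bvec p lam (w i)) ^ (p ^ (i : ℕ))

lemma bprod_zero (w : Fin 0 → (Fin n → Fin p) × Fin m) : bprod p lam 0 w = 1 := by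
  simp [bprod]

lemma bprod_succ (e : ℕ) (w : Fin (e + 1) → (Fin n → Fin p) × Fin m) :
    bprod p lam (e + 1) w = bvec p lam (w 0) * (bprod p lam e (Fin.tail w)) ^ p := by
  rw [bprod, Fin.prod_univ_succ]
  congr 1
  · simp
  · rw [bprod, ← Finset.prod_pow]
    refine Finset.prod_congr rfl fun i _ => ?_
    rw [← pow_mul, ← pow_succ]
    rfl

lemma sum_pow_q (e : ℕ) {ι' : Type*} (s : Finset ι') (h : ι' → MvPolynomial (Fin n) k) :
    (∑ i ∈ s, h i) ^ p ^ e = ∑ i ∈ s, (h i) ^ p ^ e := by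
  rw [← iterateFrobenius_def, map_sum]
  simp [iterateFrobenius_def]

lemma reindex_sum (e : ℕ)
    (F : (Fin (e + 1) → (Fin n → Fin p) × Fin m) → MvPolynomial (Fin n) k) :
    ∑ w, F w
      = ∑ x : ((Fin n → Fin p) × Fin m) × (Fin e → (Fin n → Fin p) × Fin m),
          F (Fin.cons x.1 x.2) :=
  (Fintype.sum_equiv (Fin.consEquiv (fun _ => (Fin n → Fin p) × Fin m)) _ _ (fun x => rfl)).symm

lemma levelE
    (hspan : ∀ x : k, ∃ cf : Fin m → k, x = ∑ j, cf j ^ p * lam j)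
    (hind : ∀ cf : Fin m → k, ∑ j, cf j ^ p * lam j = 0 → ∀ j, cf j = 0)
    (e : ℕ) : ∀ f : MvPolynomial (Fin n) k,
    ∃ u : (Fin e → (Fin n → Fin p) × Fin m) → MvPolynomial (Fin n) k,
      f = ∑ w, (u w) ^ (p ^ e) * bprod p lam e w ∧
      ∀ w, (u w).totalDegree ≤ f.totalDegree / p ^ e := by
  induction e with
  | zero =>
    intro f
    refine ⟨fun _ => f, ?_, fun w => by simp⟩
    rw [Fintype.sum_unique]
    simp [bprod_zero]
  | succ e IH =>
    intro f
    obtain ⟨g, hg, hgdeg⟩ := coreE' p lam hspan hind f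
    choose uu huu hud using fun i => IH (g i)
    have key : ∀ (x b c : MvPolynomial (Fin n) k),
        x ^ (p ^ (e + 1)) * (b * c ^ p) = ((x ^ (p ^ e)) * c) ^ p * b := by
      intro x b c
      rw [mul_pow, ← pow_mul, ← pow_succ]
      ring
    refine ⟨fun w => uu (w 0) (Fin.tail w), ?_, ?_⟩
    · rw [reindex_sum p e
        (fun w => (uu (w 0) (Fin.tail w)) ^ (p ^ (e + 1)) * bprod p lam (e + 1) w)]
      rw [Fintype.sum_prod_type]
      have hterm : ∀ (i : (Fin n → Fin p) × Fin m) (w : Fin e → (Fin n → Fin p) × Fin m),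
          (uu ((Fin.cons i w : Fin (e+1) → (Fin n → Fin p) × Fin m) 0)
              (Fin.tail (Fin.cons i w : Fin (e+1) → (Fin n → Fin p) × Fin m)))
                ^ (p ^ (e + 1))
              * bprod p lam (e + 1) (Fin.cons i w)
            = ((uu i w) ^ (p ^ e) * bprod p lam e w) ^ p * bvec p lam i := by
        intro i w
        rw [bprod_succ, Fin.cons_zero, Fin.tail_cons, key]
      rw [Finset.sum_congr rfl fun i _ => Finset.sum_congr rfl fun w _ => hterm i w]
      conv_lhs => rw [hg]
      refine Finset.sum_congr rfl fun i _ => ?_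
      rw [← Finset.sum_mul, ← sum_pow_char, ← huu i]
    · intro w
      refine le_trans (hud (w 0) (Fin.tail w)) (le_trans
        (Nat.div_le_div_right (hgdeg (w 0))) ?_)
      rw [Nat.div_div_eq_div_mul, ← pow_succ']

lemma levelU
    (hind : ∀ cf : Fin m → k, ∑ j, cf j ^ p * lam j = 0 → ∀ j, cf j = 0)
    (e : ℕ) : ∀ u : (Fin e → (Fin n → Fin p) × Fin m) → MvPolynomial (Fin n) k,
      ∑ w, (u w) ^ (p ^ e) * bprod p lam e w = 0 → ∀ w, u w = 0 := by
  induction e with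
  | zero =>
    intro u h w
    rw [Fintype.sum_unique] at h
    simp only [pow_zero, pow_one, bprod_zero, mul_one] at h
    rw [Subsingleton.elim w default]
    exact h
  | succ e IH =>
    intro u h w'
    have key : ∀ (x b c : MvPolynomial (Fin n) k),
        x ^ (p ^ (e + 1)) * (b * c ^ p) = ((x ^ (p ^ e)) * c) ^ p * b := by
      intro x b c
      rw [mul_pow, ← pow_mul, ← pow_succ]
      ring
    rw [reindex_sum p e
      (fun w => (u w) ^ (p ^ (e + 1)) * bprod p lam (e + 1) w)] at h
    rw [Fintype.sum_prod_type] at h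
    have hterm : ∀ (i : (Fin n → Fin p) × Fin m) (w : Fin e → (Fin n → Fin p) × Fin m),
        (u (Fin.cons i w)) ^ (p ^ (e + 1)) * bprod p lam (e + 1) (Fin.cons i w)
          = ((u (Fin.cons i w)) ^ (p ^ e) * bprod p lam e w) ^ p * bvec p lam i := by
      intro i w
      rw [bprod_succ, Fin.tail_cons, Fin.cons_zero, key]
    rw [Finset.sum_congr rfl fun i _ => Finset.sum_congr rfl fun w _ => hterm i w] at h
    have h2 : ∀ i, ∑ w, (u (Fin.cons i w)) ^ (p ^ e) * bprod p lam e w = 0 := by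
      refine coreU p lam hind
        (fun i => ∑ w, (u (Fin.cons i w)) ^ (p ^ e) * bprod p lam e w) ?_
      rw [← h]
      refine Finset.sum_congr rfl fun i _ => ?_
      rw [← Finset.sum_mul, ← sum_pow_char]
    have h4 : u (Fin.cons (w' 0) (Fin.tail w')) = 0 := IH _ (h2 (w' 0)) (Fin.tail w')
    rwa [Fin.cons_self_tail] at h4


lemma mem_of_expansion
    (hspan : ∀ x : k, ∃ cf : Fin m → k, x = ∑ j, cf j ^ p * lam j)
    (hind : ∀ cf : Fin m → k, ∑ j, cf j ^ p * lam j = 0 → ∀ j, cf j = 0)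
    (e : ℕ) (J : Ideal (MvPolynomial (Fin n) k)) (f : MvPolynomial (Fin n) k)
    (hf : f ∈ bracketPow J (p ^ e))
    (u : (Fin e → (Fin n → Fin p) × Fin m) → MvPolynomial (Fin n) k)
    (hu : f = ∑ w, (u w) ^ (p ^ e) * bprod p lam e w) :
    ∀ w, u w ∈ J := by
  classical
  rw [bracketPow] at hf
  obtain ⟨nn, cvec, y, hy⟩ := Submodule.mem_span_set'.mp hf
  have hy2 : ∀ i : Fin nn, ∃ x, x ∈ J ∧ x ^ (p ^ e) = (y i : MvPolynomial (Fin n) k) := by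
    intro i
    obtain ⟨x, hx1, hx2⟩ := (y i).2
    exact ⟨x, hx1, hx2⟩
  choose jf hjmem hjpow using hy2
  choose v hv hvdeg using fun i => levelE p lam hspan hind e (cvec i)
  set U : (Fin e → (Fin n → Fin p) × Fin m) → MvPolynomial (Fin n) k :=
    fun w => ∑ i, v i w * jf i with hU
  have hfu : f = ∑ w, (U w) ^ (p ^ e) * bprod p lam e w := by
    rw [← hy]
    calc ∑ i, cvec i • (y i : MvPolynomial (Fin n) k)
        = ∑ i, (∑ w, (v i w) ^ (p ^ e) * bprod p lam e w) * (jf i) ^ (p ^ e) := by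
          refine Finset.sum_congr rfl fun i _ => ?_
          rw [smul_eq_mul, ← hjpow i, ← hv i]
      _ = ∑ i, ∑ w, ((v i w) * jf i) ^ (p ^ e) * bprod p lam e w := by
          refine Finset.sum_congr rfl fun i _ => ?_
          rw [Finset.sum_mul]
          refine Finset.sum_congr rfl fun w _ => ?_
          rw [mul_pow]
          ring
      _ = ∑ w, ∑ i, ((v i w) * jf i) ^ (p ^ e) * bprod p lam e w := Finset.sum_comm
      _ = ∑ w, (U w) ^ (p ^ e) * bprod p lam e w := by
          refine Finset.sum_congr rfl fun w _ => ?_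
          rw [← Finset.sum_mul, hU]
          congr 1
          exact (sum_pow_q p e Finset.univ (fun i => v i w * jf i)).symm
  intro w
  have h0 : ∑ w', ((u w' - U w')) ^ (p ^ e) * bprod p lam e w' = 0 := by
    have hz : (∑ w', (u w') ^ (p ^ e) * bprod p lam e w')
        - (∑ w', (U w') ^ (p ^ e) * bprod p lam e w') = 0 := by
      rw [← hu, ← hfu, sub_self]
    rw [← Finset.sum_sub_distrib] at hz
    rw [← hz]
    refine Finset.sum_congr rfl fun w' _ => ?_
    rw [sub_pow_char_pow, sub_mul]
  have hzero := levelU p lam hind e _ h0 w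
  have huw : u w = U w := by rwa [sub_eq_zero] at hzero
  rw [huw, hU]
  exact Ideal.sum_mem _ fun i _ => Ideal.mul_mem_left _ _ (hjmem i)

open Pointwise in
lemma pow_set_totalDegree (G : Set (MvPolynomial (Fin n) k)) (d t : ℕ)
    (hdeg : ∀ f ∈ G, f.totalDegree ≤ d) (f : MvPolynomial (Fin n) k) (hf : f ∈ G ^ t) :
    f.totalDegree ≤ t * d := by
  obtain ⟨gl, hprod⟩ := Set.mem_pow.mp hf
  rw [← hprod]
  refine le_trans (totalDegree_list_prod _) ?_
  have hlen : ((List.ofFn fun i => ((gl i : MvPolynomial (Fin n) k))).map totalDegree).length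
      = t := by simp
  refine le_trans (List.sum_le_card_nsmul _ d ?_) (by rw [hlen]; simp [smul_eq_mul])
  intro x hx
  rw [List.mem_map] at hx
  obtain ⟨g, hg, rfl⟩ := hx
  rw [List.mem_ofFn] at hg
  obtain ⟨i, rfl⟩ := hg
  exact hdeg _ (gl i).2

end FrobAux

open MvPolynomial Pointwise in
/-- degree bound for generators of test ideals in a polynomial ring. -/
theorem stmt15_testIdeal_degree_bound
    (p : ℕ) [Fact p.Prime] (k : Type*) [Field k] [CharP k p]
    (hk : (frobenius k p).Finite) (n d : ℕ)
    (a : Ideal (MvPolynomial (Fin n) k))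
    (G : Set (MvPolynomial (Fin n) k)) (hgen : a = Ideal.span G)
    (hdeg : ∀ f ∈ G, f.totalDegree ≤ d) (c : ℝ) (hc : 0 ≤ c) :
    ∃ G' : Set (MvPolynomial (Fin n) k), testIdeal p a c = Ideal.span G' ∧
      ∀ f ∈ G', f.totalDegree ≤ ⌊c * (d : ℝ)⌋₊ := by
  classical
  have hp : p.Prime := Fact.out
  haveI : NeZero p := ⟨hp.ne_zero⟩
  obtain ⟨m, lam, j0, hj0, hspan, hind⟩ := exists_pbasis p k hk
  choose uc huc hucdeg using fun e => levelE p lam hspan hind e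
  set N : ℕ → ℕ := fun e => ⌈c * (p : ℝ) ^ (e + 1)⌉₊ with hN
  set T : ℕ → Ideal (MvPolynomial (Fin n) k) :=
    fun e => frobRoot (a ^ N e) (p ^ (e + 1)) with hT
  set D : ℕ := ⌊c * (d : ℝ)⌋₊ with hD
  -- membership of set-powers in ideal powers
  have hmemA : ∀ (t : ℕ) (f : MvPolynomial (Fin n) k), f ∈ G ^ t → f ∈ a ^ t := by
    intro t f hf
    rw [hgen, Ideal.span, Submodule.span_pow]
    exact Submodule.subset_span hf
  -- the coefficient sets
  set coefSet : ℕ → Set (MvPolynomial (Fin n) k) :=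
    fun e => {x | ∃ f ∈ G ^ (N e), ∃ w, x = uc (e + 1) f w} with hcoefSet
  -- T e is spanned by the coefficient set
  have hT_eq : ∀ e, T e = Ideal.span (coefSet e) := by
    intro e
    refine le_antisymm ?_ ?_
    · refine sInf_le ?_
      show a ^ N e ≤ bracketPow (Ideal.span (coefSet e)) (p ^ (e + 1))
      rw [hgen, Ideal.span, Submodule.span_pow, Submodule.span_le]
      intro f hf
      have hfe := huc (e + 1) f
      rw [SetLike.mem_coe, hfe]
      refine Ideal.sum_mem _ fun w _ => ?_
      refine Ideal.mul_mem_right _ _ ?_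
      refine Ideal.subset_span ?_
      exact ⟨uc (e + 1) f w, Ideal.subset_span ⟨f, hf, w, rfl⟩, rfl⟩
    · rw [Ideal.span_le]
      rintro x ⟨f, hf, w, rfl⟩
      rw [SetLike.mem_coe, hT]
      refine mem_frobRoot.mpr fun J hJ => ?_
      exact mem_of_expansion p lam hspan hind (e + 1) J f (hJ (hmemA _ f hf))
        (uc (e + 1) f) (huc (e + 1) f) w
  -- monotonicity of the chain
  have hmono : ∀ e, T e ≤ T (e + 1) := by
    intro e
    rw [hT_eq e, Ideal.span_le]
    rintro x ⟨f, hf, w, rfl⟩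
    rw [SetLike.mem_coe, hT]
    refine mem_frobRoot.mpr fun J hJ => ?_
    -- f^p lies in a ^ N (e+1)
    have hNle : N (e + 1) ≤ N e * p := by
      rw [hN]
      refine Nat.ceil_le.mpr ?_
      push_cast
      have h1 : c * (p : ℝ) ^ (e + 1) ≤ (N e : ℝ) := Nat.le_ceil _
      calc c * (p : ℝ) ^ (e + 1 + 1) = (c * (p : ℝ) ^ (e + 1)) * p := by ring
        _ ≤ (N e : ℝ) * p := by
            refine mul_le_mul_of_nonneg_right h1 (by positivity)
    have hfp : f ^ p ∈ a ^ N (e + 1) := by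
      refine Ideal.pow_le_pow_right hNle ?_
      rw [pow_mul]
      exact Ideal.pow_mem_pow (hmemA _ f hf) p
    -- the distinguished index
    set i0 : (Fin n → Fin p) × Fin m := (fun _ => 0, j0) with hi0
    have hbvec1 : bvec p lam i0 = 1 := by
      rw [bvec, hi0, hj0]
      have : embedA p (fun _ : Fin n => (0 : Fin p)) = 0 := by
        ext t
        simp
      rw [this, monomial_zero', C_1]
    -- expansion of f^p at level e+2
    set U : (Fin (e + 2) → (Fin n → Fin p) × Fin m) → MvPolynomial (Fin n) k :=
      fun w' => if w' 0 = i0 then uc (e + 1) f (Fin.tail w') else 0 with hUdef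
    have hexp : f ^ p = ∑ w', (U w') ^ (p ^ (e + 2)) * bprod p lam (e + 2) w' := by
      rw [reindex_sum p (e + 1)
        (fun w' => (U w') ^ (p ^ (e + 2)) * bprod p lam (e + 2) w')]
      rw [Fintype.sum_prod_type]
      have hterm : ∀ (i : (Fin n → Fin p) × Fin m)
          (w : Fin (e + 1) → (Fin n → Fin p) × Fin m),
          (U (Fin.cons i w)) ^ (p ^ (e + 2)) * bprod p lam (e + 2) (Fin.cons i w)
            = if i = i0 then ((uc (e + 1) f w) ^ (p ^ (e + 1)) * bprod p lam (e + 1) w) ^ p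
                else 0 := by
        intro i w
        have hU1 : U (Fin.cons i w) = if i = i0 then uc (e + 1) f w else 0 := by
          rw [hUdef]
          simp only [Fin.cons_zero, Fin.tail_cons]
        rw [hU1, bprod_succ, Fin.cons_zero, Fin.tail_cons]
        by_cases h : i = i0
        · rw [if_pos h, if_pos h, h, hbvec1, one_mul, mul_pow, ← pow_mul, ← pow_succ]
        · rw [if_neg h, if_neg h, zero_pow (pow_ne_zero _ hp.ne_zero), zero_mul]
      rw [Finset.sum_congr rfl fun i _ => Finset.sum_congr rfl fun w _ => hterm i w]
      simp only [Finset.sum_ite_irrel, Finset.sum_const_zero]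
      rw [Finset.sum_ite_eq' Finset.univ i0]
      simp only [Finset.mem_univ, if_pos]
      rw [← sum_pow_char, ← huc (e + 1) f]
    have hall := mem_of_expansion p lam hspan hind (e + 2) J (f ^ p)
      (hJ hfp) U hexp
    have := hall (Fin.cons i0 w)
    rw [hUdef] at this
    simpa using this
  have hmonotone : Monotone T := monotone_nat_of_le_succ hmono
  -- choice of the starting level
  have hcd : c * (d : ℝ) < (D : ℝ) + 1 := Nat.lt_floor_add_one _
  set δ : ℝ := (D : ℝ) + 1 - c * d with hδdef
  have hδpos : 0 < δ := by rw [hδdef]; linarith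
  have hp1 : (1 : ℝ) < (p : ℝ) := by exact_mod_cast hp.one_lt
  obtain ⟨E₀, hE₀⟩ : ∃ E : ℕ, (d : ℝ) < δ * (p : ℝ) ^ (E + 1) := by
    obtain ⟨E, hE⟩ := pow_unbounded_of_one_lt ((d : ℝ) / δ) hp1
    refine ⟨E, ?_⟩
    have h2 : (d : ℝ) / δ < (p : ℝ) ^ (E + 1) :=
      lt_of_lt_of_le hE (pow_le_pow_right₀ (le_of_lt hp1) (Nat.le_succ E))
    calc (d : ℝ) = ((d : ℝ) / δ) * δ := by field_simp
      _ < (p : ℝ) ^ (E + 1) * δ := by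
          exact mul_lt_mul_of_pos_right h2 hδpos
      _ = δ * (p : ℝ) ^ (E + 1) := mul_comm _ _
  -- key degree estimate for levels ≥ E₀
  have hdegkey : ∀ e, E₀ ≤ e → N e * d / p ^ (e + 1) ≤ D := by
    intro e he
    have hq0 : 0 < p ^ (e + 1) := pow_pos hp.pos _
    have hreal : ((N e : ℝ)) * d < ((D : ℝ) + 1) * (p : ℝ) ^ (e + 1) := by
      have h1 : (N e : ℝ) < c * (p : ℝ) ^ (e + 1) + 1 := by
        rw [hN]
        exact Nat.ceil_lt_add_one (by positivity)
      have h2 : (p : ℝ) ^ (E₀ + 1) ≤ (p : ℝ) ^ (e + 1) :=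
        pow_le_pow_right₀ (le_of_lt hp1) (by omega)
      have h3 : (d : ℝ) < δ * (p : ℝ) ^ (e + 1) :=
        lt_of_lt_of_le hE₀ (mul_le_mul_of_nonneg_left h2 (le_of_lt hδpos))
      have h4 : (N e : ℝ) * d ≤ (c * (p : ℝ) ^ (e + 1) + 1) * d := by
        refine mul_le_mul_of_nonneg_right (le_of_lt h1) (by positivity)
      have h5 : (c * (p : ℝ) ^ (e + 1) + 1) * d = c * d * (p : ℝ) ^ (e + 1) + d := by ring
      have h6 : c * d * (p : ℝ) ^ (e + 1) + d
          < c * d * (p : ℝ) ^ (e + 1) + δ * (p : ℝ) ^ (e + 1) := by linarith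
      have h7 : c * d * (p : ℝ) ^ (e + 1) + δ * (p : ℝ) ^ (e + 1)
          = ((D : ℝ) + 1) * (p : ℝ) ^ (e + 1) := by
        rw [hδdef]; ring
      calc (N e : ℝ) * d ≤ c * d * (p : ℝ) ^ (e + 1) + d := by rw [← h5]; exact h4
        _ < ((D : ℝ) + 1) * (p : ℝ) ^ (e + 1) := by rw [← h7]; exact h6
    have hnat : N e * d < (D + 1) * p ^ (e + 1) := by
      have := hreal
      push_cast at this
      exact_mod_cast this
    exact Nat.lt_succ_iff.mp ((Nat.div_lt_iff_lt_mul hq0).mpr hnat)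
  -- the generating set
  refine ⟨⋃ j : ℕ, coefSet (E₀ + j), ?_, ?_⟩
  · have hspan' : Ideal.span (⋃ j : ℕ, coefSet (E₀ + j)) = ⨆ j : ℕ, T (E₀ + j) := by
      rw [Ideal.span, Submodule.span_iUnion]
      exact iSup_congr fun j => (hT_eq (E₀ + j)).symm
    rw [hspan']
    refine le_antisymm ?_ ?_
    · refine iSup_le fun e => ?_
      refine le_trans (hmonotone (Nat.le_add_left e E₀)) ?_
      exact le_iSup (fun j => T (E₀ + j)) e
    · exact iSup_le fun j => le_iSup T (E₀ + j)
  · intro f hf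
    rw [Set.mem_iUnion] at hf
    obtain ⟨j, hj⟩ := hf
    obtain ⟨g, hg, w, rfl⟩ := hj
    refine le_trans (hucdeg (E₀ + j + 1) g w) ?_
    have hgd : g.totalDegree ≤ N (E₀ + j) * d :=
      pow_set_totalDegree G d (N (E₀ + j)) hdeg g hg
    refine le_trans (Nat.div_le_div_right hgd) ?_
    exact hdegkey (E₀ + j) (Nat.le_add_right _ _)
end
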